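/- Let X be a topological space, and let ℱ be a collection of subsets of X such that: (i) each S ∈ ℱ has a well-defined finite dimension dim S ∈ ℕ ∪ {−∞} with dim(∅) = −∞ and dim S = dim(cl S); (ii) for each nonempty S ∈ ℱ, the closure cl(S) belongs to ℱ and the set cl(S) ∖ S belongs to ℱ with dim(cl(S) ∖ S) < dim S. Then every S ∈ ℱ is a finite Boolean combination (finite unions, intersections, complements) of sets of the form cl(T) with T ∈ ℱ. -/
import Mathlib


/-- Finite Boolean combinations (finite unions, intersections and complements
within the ambient space) of a generating family `G` of subsets of `X`. -/
inductive BooleanComb {X : Type*} (G : Set (Set X)) : Set X → Prop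
  | base : ∀ S ∈ G, BooleanComb G S
  | empty : BooleanComb G ∅
  | union : ∀ S T, BooleanComb G S → BooleanComb G T → BooleanComb G (S ∪ T)
  | inter : ∀ S T, BooleanComb G S → BooleanComb G T → BooleanComb G (S ∩ T)
  | compl : ∀ S, BooleanComb G S → BooleanComb G Sᶜ

/-- Abstract induction-on-dimension: if a family `F` of subsets of a topological
space carries a dimension function with `dim ∅ = ⊥`, `dim S = dim (cl S)`, and
for each nonempty `S ∈ F` both `cl S` and `cl S ∖ S` belong to `F` with
`dim (cl S ∖ S) < dim S`, then every member of `F` is a finite Boolean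
combination of closures of members of `F`. -/
theorem stmt_12 {X : Type*} [TopologicalSpace X] (F : Set (Set X))
    (dim : Set X → WithBot ℕ)
    (hdim_empty : dim ∅ = ⊥)
    (hdim_closure : ∀ S ∈ F, dim S = dim (closure S))
    (hcl : ∀ S ∈ F, S.Nonempty → closure S ∈ F)
    (hbd : ∀ S ∈ F, S.Nonempty → closure S \ S ∈ F)
    (hlt : ∀ S ∈ F, S.Nonempty → dim (closure S \ S) < dim S) :
    ∀ S ∈ F, BooleanComb {C : Set X | ∃ T ∈ F, C = closure T} S := by
  suffices h : ∀ d : WithBot ℕ, ∀ S ∈ F, dim S = d →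
      BooleanComb {C : Set X | ∃ T ∈ F, C = closure T} S by
    intro S hS; exact h (dim S) S hS rfl
  intro d
  induction d using WellFoundedLT.induction with
  | _ d ih =>
    intro S hS hd
    rcases S.eq_empty_or_nonempty with rfl | hne
    · exact BooleanComb.empty
    · have key : S = closure S ∩ (closure S \ S)ᶜ := by
        ext x
        simp only [Set.mem_inter_iff, Set.mem_compl_iff, Set.mem_diff, not_and, not_not]
        constructor
        · intro hx; exact ⟨subset_closure hx, fun _ => hx⟩
        · intro hx; exact hx.2 hx.1
      rw [key]
      refine BooleanComb.inter _ _ (BooleanComb.base _ ⟨S, hS, rfl⟩) (BooleanComb.compl _ ?_)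
      exact ih _ (hd ▸ hlt S hS hne) _ (hbd S hS hne) rfl
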